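/- arXiv:1210.2491 — 4 statements merged into one kernel-verified Lean document; each statement's English description precedes it below -/
import Mathlib

section
/- Let n ≥ 1 and let w_{jk} (1 ≤ j,k ≤ n, j ≠ k) be arbitrary real (or complex) numbers. Define the n×n matrix A by A_{jk} = −w_{jk} for j ≠ k and A_{jj} = ∑_{r≠j} w_{jr}. Then for every r with 1 ≤ r ≤ n, det M_r = ∑_T ∏_{(v_j,v_k)∈ET} w_{jk}, where M_r is the principal minor of A obtained by removing row r and column r, and the sum is over all directed trees T with vertex set {v₁,…,v_n} and root v_r. -/
open Finset Matrix


open Classical in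
/-- If some vertex never reaches `r`, the incidence-type matrix is singular. -/
lemma det_zero_of_noreach {n : ℕ} (r : Fin n) (F : Fin n → Fin n)
    (x : Fin n) (hx : ∀ m, F^[m] x ≠ r) :
    (Matrix.of fun j k : {j : Fin n // j ≠ r} =>
      (if (j : Fin n) = (k : Fin n) then (1:ℝ) else 0)
        - (if F j = (k : Fin n) then 1 else 0)).det = 0 := by
  -- find a cycle
  obtain ⟨a, b, hne, hab⟩ : ∃ a b : ℕ, a ≠ b ∧ F^[a] x = F^[b] x := by
    obtain ⟨a, b, hne, h⟩ := Finite.exists_ne_map_eq_of_infinite (fun m : ℕ => F^[m] x)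
    exact ⟨a, b, hne, h⟩
  wlog hlt : a < b generalizing a b
  · exact this b a hne.symm hab.symm (by omega)
  set y := F^[a] x with hy
  set p := b - a with hp
  have hp0 : 0 < p := by omega
  have hcyc : F^[p] y = y := by
    rw [hy, ← Function.iterate_add_apply, show p + a = b by omega]
    exact hab.symm
  set C : Finset (Fin n) := (Finset.range p).image (fun i => F^[i] y) with hC
  have hyr : ∀ i : ℕ, F^[i] y ≠ r := by
    intro i
    rw [hy, ← Function.iterate_add_apply]
    exact hx _
  have hCr : ∀ z ∈ C, z ≠ r := by
    intro z hz
    simp only [hC, Finset.mem_image, Finset.mem_range] at hz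
    obtain ⟨i, _, rfl⟩ := hz
    exact hyr i
  have himg : C.image F = C := by
    ext z
    simp only [hC, Finset.mem_image, Finset.mem_range]
    constructor
    · rintro ⟨_, ⟨i, hi, rfl⟩, rfl⟩
      rcases Nat.lt_or_ge (i + 1) p with h | h
      · exact ⟨i + 1, h, Function.iterate_succ_apply' F i y⟩
      · have hip : i + 1 = p := by omega
        refine ⟨0, hp0, ?_⟩
        rw [Function.iterate_zero_apply, ← Function.iterate_succ_apply' F i y,
          Nat.succ_eq_add_one, hip, hcyc]
    · rintro ⟨i, hi, rfl⟩
      rcases Nat.eq_zero_or_pos i with rfl | hi0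
      · refine ⟨F^[p-1] y, ⟨p - 1, by omega, rfl⟩, ?_⟩
        rw [← Function.iterate_succ_apply' F (p-1) y, Nat.succ_eq_add_one,
          show p - 1 + 1 = p from by omega, hcyc, Function.iterate_zero_apply]
      · refine ⟨F^[i-1] y, ⟨i - 1, by omega, rfl⟩, ?_⟩
        rw [← Function.iterate_succ_apply' F (i-1) y, Nat.succ_eq_add_one,
          show i - 1 + 1 = i from by omega]
  have hinj : Set.InjOn F C := by
    apply Finset.injOn_of_card_image_eq
    rw [himg]
  -- the left kernel vector
  set v : {j : Fin n // j ≠ r} → ℝ := fun k => if (k : Fin n) ∈ C then 1 else 0 with hv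
  have hy0 : y ∈ C := by
    simp only [hC, Finset.mem_image, Finset.mem_range]
    exact ⟨0, hp0, rfl⟩
  have hvne : v ≠ 0 := by
    intro h
    have := congrFun h ⟨y, hyr 0⟩
    simp only [hv, hy0, if_pos, Pi.zero_apply] at this
    exact one_ne_zero this
  refine Matrix.exists_vecMul_eq_zero_iff.mp ⟨v, hvne, ?_⟩
  funext k
  simp only [Matrix.vecMul, dotProduct, Matrix.of_apply, Pi.zero_apply,
    mul_sub, mul_ite, mul_one, mul_zero]
  rw [Finset.sum_sub_distrib]
  have h1 : (∑ j : {j : Fin n // j ≠ r},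
      if (j : Fin n) = (k : Fin n) then v j else 0) = v k := by
    rw [Finset.sum_eq_single k]
    · simp
    · intro j _ hjk
      rw [if_neg (fun h => hjk (Subtype.ext h))]
    · intro h; exact absurd (Finset.mem_univ k) h
  have h2 : (∑ j : {j : Fin n // j ≠ r},
      if F (j : Fin n) = (k : Fin n) then v j else 0)
      = (if (k : Fin n) ∈ C then 1 else 0) := by
    have hterm : ∀ j : {j : Fin n // j ≠ r},
        (if F (j : Fin n) = (k : Fin n) then v j else 0)
        = (if (j : Fin n) ∈ C ∧ F (j : Fin n) = (k : Fin n) then 1 else 0) := by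
      intro j
      by_cases h1 : F (j : Fin n) = (k : Fin n) <;> by_cases h2 : (j : Fin n) ∈ C <;>
        simp [h1, h2, hv]
    rw [Finset.sum_congr rfl (fun j _ => hterm j)]
    rw [← Finset.sum_subtype (Finset.univ.filter (fun j : Fin n => j ≠ r))
      (by simp) (fun z => if z ∈ C ∧ F z = (k : Fin n) then (1:ℝ) else 0)]
    have hsub : C ⊆ Finset.univ.filter (fun j : Fin n => j ≠ r) := by
      intro z hz
      simp [hCr z hz]
    rw [← Finset.sum_subset hsub (by
      intro z _ hzC
      rw [if_neg (fun h => hzC h.1)])]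
    have e1 : (∑ z ∈ C, if z ∈ C ∧ F z = (k : Fin n) then (1:ℝ) else 0)
        = ∑ z ∈ C, if F z = (k : Fin n) then (1:ℝ) else 0 := by
      apply Finset.sum_congr rfl
      intro z hz
      simp [hz]
    have e2 := Finset.sum_image (s := C) (g := F)
      (f := fun z => if z = (k : Fin n) then (1:ℝ) else 0)
      (fun x hx y hy h => hinj hx hy h)
    rw [himg] at e2
    rw [e1, ← e2, Finset.sum_ite_eq' C ((k : Fin n)) (fun _ => (1:ℝ))]
  rw [h1, h2, hv]
  simp

open Classical in
/-- If every vertex reaches `r`, the incidence-type matrix has determinant one. -/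
lemma det_one_of_tree {n : ℕ} (r : Fin n) (F : Fin n → Fin n)
    (h : ∀ x : Fin n, ∃ m : ℕ, F^[m] x = r) :
    (Matrix.of fun j k : {j : Fin n // j ≠ r} =>
      (if (j : Fin n) = (k : Fin n) then (1:ℝ) else 0)
        - (if F j = (k : Fin n) then 1 else 0)).det = 1 := by
  set d : Fin n → ℕ := fun x => Nat.find (h x) with hd
  have hspec : ∀ x, F^[d x] x = r := fun x => Nat.find_spec (h x)
  have hmin : ∀ x m, m < d x → F^[m] x ≠ r := fun x m hm => Nat.find_min (h x) hm
  have hd1 : ∀ x : Fin n, x ≠ r → 1 ≤ d x := by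
    intro x hxr
    by_contra hc
    have h0 : d x = 0 := by omega
    have hs := hspec x
    rw [h0, Function.iterate_zero_apply] at hs
    exact hxr hs
  have hstep : ∀ x : Fin n, x ≠ r → d (F x) = d x - 1 := by
    intro x hxr
    have hx1 : 1 ≤ d x := hd1 x hxr
    have h1 : d (F x) ≤ d x - 1 := by
      apply Nat.find_le
      have h3 : F^[(d x - 1) + 1] x = r := by
        rw [show d x - 1 + 1 = d x from by omega]; exact hspec x
      rwa [Function.iterate_succ_apply] at h3
    have h2 : d x ≤ d (F x) + 1 := by
      by_contra hc
      exact hmin x (d (F x) + 1) (by omega)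
        (by rw [Function.iterate_succ_apply]; exact hspec (F x))
    omega
  set B := (Matrix.of fun j k : {j : Fin n // j ≠ r} =>
      (if (j : Fin n) = (k : Fin n) then (1:ℝ) else 0)
        - (if F j = (k : Fin n) then 1 else 0)) with hB
  have ht : B.BlockTriangular (fun j : {j : Fin n // j ≠ r} => -(d (j : Fin n) : ℤ)) := by
    intro i j hij
    have hij2 : -(d (j : Fin n) : ℤ) < -(d (i : Fin n) : ℤ) := hij
    have hij' : d (i : Fin n) < d (j : Fin n) := by omega
    have h1 : (i : Fin n) ≠ (j : Fin n) := fun h => by rw [h] at hij'; omega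
    have h2 : F (i : Fin n) ≠ (j : Fin n) := by
      intro h
      have h3 := hstep (i : Fin n) i.prop
      have h4 := hd1 (i : Fin n) i.prop
      rw [h] at h3
      omega
    simp [hB, h1, h2]
  rw [ht.det]
  apply Finset.prod_eq_one
  intro a _
  have hone : B.toSquareBlock (fun j : {j : Fin n // j ≠ r} => -(d (j : Fin n) : ℤ)) a = 1 := by
    ext ⟨i, hi⟩ ⟨j, hj⟩
    have hdi : d (i : Fin n) = d (j : Fin n) := by
      have h5 := hi.trans hj.symm
      omega
    have h2 : F (i : Fin n) ≠ (j : Fin n) := by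
      intro hcc
      have h3 := hstep (i : Fin n) i.prop
      have h4 := hd1 (i : Fin n) i.prop
      rw [hcc] at h3
      omega
    have key : ((⟨i, hi⟩ : {b : {j : Fin n // j ≠ r} // -(d (b : Fin n) : ℤ) = a}) = ⟨j, hj⟩)
        ↔ ((i : Fin n) = (j : Fin n)) := by
      rw [Subtype.mk_eq_mk, Subtype.ext_iff]
    rw [Matrix.toSquareBlock_def, Matrix.one_apply]
    by_cases hij : (i : Fin n) = (j : Fin n)
    · rw [if_pos (key.mpr hij), hB]
      simp only [Matrix.of_apply, if_pos hij, if_neg h2, sub_zero]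
    · rw [if_neg (fun hc => hij (key.mp hc))]
      simp [hB, hij, h2]
  rw [hone, Matrix.det_one]

open Classical in
/-- Tutte's directed matrix-tree theorem, Theorem 3.1 of the paper.
A directed tree with root `v_r` on the vertex set `{v_1,…,v_n}` is encoded by its
"parent" map `p : Fin n → Fin n` (with `p r = r`, the edge set being `{(j, p j) : j ≠ r}`),
the defining condition being that every vertex reaches the root under iteration of `p`. -/
theorem directed_matrix_tree (n : ℕ) (hn : 1 ≤ n) (w : Fin n → Fin n → ℝ) (r : Fin n) :
    Matrix.det
      ((Matrix.of fun j k : Fin n =>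
          if j = k then ∑ t ∈ Finset.univ.filter (· ≠ j), w j t else -(w j k)).submatrix
        (Subtype.val : {j : Fin n // j ≠ r} → Fin n)
        (Subtype.val : {j : Fin n // j ≠ r} → Fin n)) =
    ∑ᶠ p ∈ {p : Fin n → Fin n | p r = r ∧ ∀ j, ∃ m : ℕ, p^[m] j = r},
      ∏ j ∈ Finset.univ.filter (· ≠ r), w j (p j) := by
  -- elementary row vectors
  set e : {j : Fin n // j ≠ r} → Fin n → ({j : Fin n // j ≠ r} → ℝ) :=
    fun j t k => (if (j : Fin n) = (k : Fin n) then (1:ℝ) else 0)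
      - (if t = (k : Fin n) then 1 else 0) with he
  -- decompose the rows
  have hrow : ((Matrix.of fun j k : Fin n =>
          if j = k then ∑ t ∈ Finset.univ.filter (· ≠ j), w j t else -(w j k)).submatrix
        (Subtype.val : {j : Fin n // j ≠ r} → Fin n)
        (Subtype.val : {j : Fin n // j ≠ r} → Fin n))
      = Matrix.of (fun j : {j : Fin n // j ≠ r} =>
          ∑ t : Fin n, w (j : Fin n) t • e j t) := by
    ext j k
    simp only [Matrix.submatrix_apply, Matrix.of_apply, Finset.sum_apply, Pi.smul_apply,
      smul_eq_mul, he, mul_sub, mul_ite, mul_one, mul_zero]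
    rw [Finset.sum_sub_distrib]
    have hsum2 : (∑ t : Fin n, if t = (k : Fin n) then w (j : Fin n) t else 0)
        = w (j : Fin n) (k : Fin n) := by
      rw [Finset.sum_ite_eq' Finset.univ ((k : Fin n)) (fun t => w (j : Fin n) t)]
      simp
    by_cases hjk : (j : Fin n) = (k : Fin n)
    · rw [if_pos hjk, hsum2]
      simp only [if_pos hjk]
      rw [Finset.filter_ne', Finset.sum_erase_eq_sub (Finset.mem_univ _), ← hjk]
    · rw [if_neg hjk, hsum2]
      simp only [if_neg hjk]
      rw [Finset.sum_const_zero]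
      ring
  rw [hrow]
  -- expand the determinant by multilinearity
  have hexp : (Matrix.of (fun j : {j : Fin n // j ≠ r} =>
          ∑ t : Fin n, w (j : Fin n) t • e j t)).det
      = ∑ σ : {j : Fin n // j ≠ r} → Fin n,
          (∏ j : {j : Fin n // j ≠ r}, w (j : Fin n) (σ j)) •
            (Matrix.of fun j k : {j : Fin n // j ≠ r} => e j (σ j) k).det := by
    have h2 := MultilinearMap.map_sum
      (f := (Matrix.detRowAlternating
        : ({j : Fin n // j ≠ r} → ℝ) [⋀^{j : Fin n // j ≠ r}]→ₗ[ℝ] ℝ).toMultilinearMap)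
      (g := fun (j : {j : Fin n // j ≠ r}) (t : Fin n) => w (j : Fin n) t • e j t)
    have h3 : ∀ σ : {j : Fin n // j ≠ r} → Fin n,
        (Matrix.detRowAlternating
          : ({j : Fin n // j ≠ r} → ℝ) [⋀^{j : Fin n // j ≠ r}]→ₗ[ℝ] ℝ).toMultilinearMap
          (fun j => w (j : Fin n) (σ j) • e j (σ j))
        = (∏ j : {j : Fin n // j ≠ r}, w (j : Fin n) (σ j)) •
            (Matrix.detRowAlternating
              : ({j : Fin n // j ≠ r} → ℝ) [⋀^{j : Fin n // j ≠ r}]→ₗ[ℝ] ℝ).toMultilinearMap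
              (fun j => e j (σ j)) :=
      fun σ => MultilinearMap.map_smul_univ _ _ _
    exact h2.trans (Finset.sum_congr rfl fun σ _ => h3 σ)
  rw [hexp]
  -- identify each determinant as 0 or 1
  have hval : ∀ σ : {j : Fin n // j ≠ r} → Fin n,
      (Matrix.of fun j k : {j : Fin n // j ≠ r} => e j (σ j) k).det
      = if (∀ x : Fin n, ∃ m : ℕ,
            (fun y => if hy : y = r then r else σ ⟨y, hy⟩)^[m] x = r) then 1 else 0 := by
    intro σ
    set F : Fin n → Fin n := fun y => if hy : y = r then r else σ ⟨y, hy⟩ with hF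
    have hFj : ∀ j : {j : Fin n // j ≠ r}, F (j : Fin n) = σ j := by
      intro j
      simp only [hF, dif_neg j.prop]
    have hBe : (Matrix.of fun j k : {j : Fin n // j ≠ r} => e j (σ j) k)
        = (Matrix.of fun j k : {j : Fin n // j ≠ r} =>
            (if (j : Fin n) = (k : Fin n) then (1:ℝ) else 0)
              - (if F (j : Fin n) = (k : Fin n) then 1 else 0)) := by
      ext j k
      simp only [he, Matrix.of_apply, hFj j]
    rw [hBe]
    by_cases hP : ∀ x : Fin n, ∃ m : ℕ, F^[m] x = r
    · rw [if_pos hP]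
      exact det_one_of_tree r F hP
    · rw [if_neg hP]
      push_neg at hP
      obtain ⟨x, hx⟩ := hP
      exact det_zero_of_noreach r F x hx
  -- rewrite the finsum as a finite sum
  have hQ : {p : Fin n → Fin n | p r = r ∧ ∀ j, ∃ m : ℕ, p^[m] j = r}
      = ↑(Finset.univ.filter (fun p : Fin n → Fin n =>
          p r = r ∧ ∀ j, ∃ m : ℕ, p^[m] j = r)) := by
    ext p
    simp
  rw [hQ, finsum_mem_coe_finset]
  -- match the two sums
  rw [Finset.sum_congr rfl (fun σ _ => by rw [hval σ])]
  have hsplit : (∑ σ : {j : Fin n // j ≠ r} → Fin n,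
      (∏ j : {j : Fin n // j ≠ r}, w (j : Fin n) (σ j)) •
        (if (∀ x : Fin n, ∃ m : ℕ,
            (fun y => if hy : y = r then r else σ ⟨y, hy⟩)^[m] x = r) then (1:ℝ) else 0))
      = ∑ σ ∈ Finset.univ.filter (fun σ : {j : Fin n // j ≠ r} → Fin n =>
          (∀ x : Fin n, ∃ m : ℕ,
            (fun y => if hy : y = r then r else σ ⟨y, hy⟩)^[m] x = r)),
          ∏ j : {j : Fin n // j ≠ r}, w (j : Fin n) (σ j) := by
    rw [Finset.sum_filter]
    apply Finset.sum_congr rfl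
    intro σ _
    by_cases hP : (∀ x : Fin n, ∃ m : ℕ,
        (fun y => if hy : y = r then r else σ ⟨y, hy⟩)^[m] x = r)
    · rw [if_pos hP, if_pos hP, smul_eq_mul, mul_one]
    · rw [if_neg hP, if_neg hP, smul_eq_mul, mul_zero]
  rw [hsplit]
  -- the bijection σ ↦ F_σ
  apply Finset.sum_bij'
    (i := fun (σ : {j : Fin n // j ≠ r} → Fin n) _ =>
      (fun y => if hy : y = r then r else σ ⟨y, hy⟩ : Fin n → Fin n))
    (j := fun (p : Fin n → Fin n) _ => (fun j : {j : Fin n // j ≠ r} => p (j : Fin n)))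
  · -- hi : maps into the filter
    intro σ hσ
    simp only [Finset.mem_filter, Finset.mem_univ, true_and] at hσ ⊢
    exact ⟨by simp, hσ⟩
  · -- hj
    intro p hp
    simp only [Finset.mem_filter, Finset.mem_univ, true_and] at hp ⊢
    have hFp : (fun y => if hy : y = r then r else p (y : Fin n)) = p := by
      funext y
      by_cases hy : y = r
      · rw [dif_pos hy, hy, hp.1]
      · rw [dif_neg hy]
    intro x
    obtain ⟨m, hm⟩ := hp.2 x
    refine ⟨m, ?_⟩
    have : (fun y => if hy : y = r then r else (fun j : {j : Fin n // j ≠ r} => p (j : Fin n)) ⟨y, hy⟩)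
        = p := hFp
    rw [this]
    exact hm
  · -- left inverse
    intro σ hσ
    funext j
    simp only [dif_neg j.prop]
  · -- right inverse
    intro p hp
    simp only [Finset.mem_filter, Finset.mem_univ, true_and] at hp
    funext y
    by_cases hy : y = r
    · rw [dif_pos hy, hy, hp.1]
    · rw [dif_neg hy]
  · -- values agree
    intro σ hσ
    rw [Finset.prod_subtype (p := fun j : Fin n => j ≠ r)
      (Finset.univ.filter (fun j : Fin n => j ≠ r)) (by intro x; simp)
      (fun x => w x ((fun y => if hy : y = r then r else σ ⟨y, hy⟩) x))]
    apply Finset.prod_congr rfl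
    intro j _
    simp only [dif_neg j.prop]
end

section
/- For all a, b > 0 there exists c > 0 depending only on a and b such that for every n ≥ 1 and every n×n real matrix A = I + X which is symmetric positive definite with X_{jj} = 0 for all j, |X_{jk}| ≤ a/n for all j,k, and ‖A^{−1}‖₂ ≤ b, one has: ‖A^{−1}‖_∞ = ‖A^{−1}‖₁ ≤ c, and every entry of the matrix X' = A^{−1} − I satisfies |X'_{jk}| ≤ c/n. -/
open MeasureTheory Matrix Finset

/-- The ℓ^p norm on `Fin n → ℝ` (with `p = ⊤` the maximum norm). -/
noncomputable def lpnorm {n : ℕ} (p : ENNReal) (x : Fin n → ℝ) : ℝ :=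
  if p = ⊤ then ⨆ j, |x j| else (∑ j, |x j| ^ p.toReal) ^ (1 / p.toReal)

/-- The operator norm induced by the ℓ^p vector norm. -/
noncomputable def opNorm {n : ℕ} (p : ENNReal) (A : Matrix (Fin n) (Fin n) ℝ) : ℝ :=
  sSup {c : ℝ | ∃ x : Fin n → ℝ, x ≠ 0 ∧ c = lpnorm p (A.mulVec x) / lpnorm p x}

/-- Condition (A): `A = I + X` is symmetric positive definite, `X` has zero diagonal,
`|X_{jk}| ≤ a/n` for all `j,k`, and `‖A⁻¹‖₂ ≤ b`. -/
def CondA {n : ℕ} (a b : ℝ) (A : Matrix (Fin n) (Fin n) ℝ) : Prop :=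
  A.IsSymm ∧ A.PosDef ∧ (∀ j, A j j = 1) ∧
    (∀ j k, j ≠ k → |A j k| ≤ a / n) ∧ opNorm 2 A⁻¹ ≤ b

/-- The cube `U_n(ρ) = {θ ∈ ℝⁿ : |θ_j| ≤ ρ for all j}`. -/
def Uset (n : ℕ) (ρ : ℝ) : Set (Fin n → ℝ) := {θ | ∀ j, |θ j| ≤ ρ}

/-- Conditions (H1)–(H2): `H` is C¹ with `H(θ) ≤ c₁ θᵀAθ/n` and
`‖∇H(θ)‖_∞ ≤ c₂ (‖θ‖_∞³ + ‖θ‖_∞)/n`.  (The norm `‖θ‖` on `Fin n → ℝ` is the sup norm.) -/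
def CondH {n : ℕ} (c₁ c₂ : ℝ) (A : Matrix (Fin n) (Fin n) ℝ) (H : (Fin n → ℝ) → ℝ) : Prop :=
  ContDiff ℝ 1 H ∧
    (∀ θ, H θ ≤ c₁ * (θ ⬝ᵥ A.mulVec θ) / n) ∧
    (∀ θ (j : Fin n), |fderiv ℝ H θ (Pi.single j 1)| ≤ c₂ * (‖θ‖ ^ 3 + ‖θ‖) / n)

/-! Write `X' = A⁻¹ - I` and `Y = I - A`. The entries of `Y` are at most `a/n`, so its rows and
columns have Euclidean norm at most `a/√n`. From `A⁻¹A = I`, column `k` of `X'` is `A⁻¹` applied to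
column `k` of `Y`, of Euclidean norm at most `b·a/√n`. From `AA⁻¹ = I`, `X' = Y + Y X'`, and
Cauchy–Schwarz between row `j` of `Y` and column `k` of `X'` gives `|X'_{jk}| ≤ (a + a²b)/n`.
Summing a row gives `‖A⁻¹‖_∞ ≤ 1 + a + a²b`, and `‖A⁻¹‖₁ = ‖(A⁻¹)ᵀ‖_∞ = ‖A⁻¹‖_∞` by symmetry. -/

section LpNorm

variable {n : ℕ} {p : ENNReal}

open WithLp in
lemma lpnorm_eq_norm_toLp [Fact (1 ≤ p)] (x : Fin n → ℝ) : lpnorm p x = ‖toLp p x‖ := by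
  rcases eq_or_ne p ⊤ with rfl | hp
  · simp [lpnorm, PiLp.norm_eq_ciSup]
  · have hp' : 0 < p.toReal := ENNReal.toReal_pos (zero_lt_one.trans_le Fact.out).ne' hp
    simp [lpnorm, hp, PiLp.norm_eq_sum hp']

lemma lpnorm_nonneg [Fact (1 ≤ p)] (x : Fin n → ℝ) : 0 ≤ lpnorm p x :=
  (lpnorm_eq_norm_toLp (p := p) x).symm ▸ norm_nonneg _

lemma lpnorm_pos [Fact (1 ≤ p)] {x : Fin n → ℝ} (hx : x ≠ 0) : 0 < lpnorm p x := by
  simpa [lpnorm_eq_norm_toLp] using hx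

lemma lpnorm_zero [Fact (1 ≤ p)] : lpnorm p (0 : Fin n → ℝ) = 0 := by
  simp [lpnorm_eq_norm_toLp]

lemma lpnorm_top_eq_iSup (x : Fin n → ℝ) : lpnorm ⊤ x = ⨆ j, |x j| := if_pos rfl

lemma abs_le_lpnorm_top (x : Fin n → ℝ) (j : Fin n) : |x j| ≤ lpnorm ⊤ x :=
  lpnorm_top_eq_iSup x ▸ le_ciSup (f := fun j => |x j|) (Set.finite_range _).bddAbove j

lemma lpnorm_one_eq_sum (x : Fin n → ℝ) : lpnorm 1 x = ∑ j, |x j| := by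
  simp [lpnorm]

lemma lpnorm_two_eq_sqrt (x : Fin n → ℝ) : lpnorm 2 x = √(∑ j, x j ^ 2) := by
  simp [lpnorm_eq_norm_toLp, EuclideanSpace.norm_eq]

lemma abs_sum_mul_le_lpnorm_two_mul (u v : Fin n → ℝ) :
    |∑ j, u j * v j| ≤ lpnorm 2 u * lpnorm 2 v := by
  simpa [lpnorm_eq_norm_toLp, PiLp.inner_apply, mul_comm] using
    abs_real_inner_le_norm (WithLp.toLp 2 u) (WithLp.toLp 2 v)

lemma lpnorm_two_le_sqrt_mul_of_abs_le {x : Fin n → ℝ} {ε : ℝ} (hε : 0 ≤ ε) (hx : ∀ j, |x j| ≤ ε) :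
    lpnorm 2 x ≤ √n * ε := by
  rw [lpnorm_two_eq_sqrt, ← Real.sqrt_sq hε, ← Real.sqrt_mul n.cast_nonneg]
  refine Real.sqrt_le_sqrt ?_
  calc ∑ j, x j ^ 2 ≤ ∑ _j : Fin n, ε ^ 2 :=
        sum_le_sum fun j _ => sq_le_sq' (abs_le.mp (hx j)).1 (abs_le.mp (hx j)).2
    _ = n * ε ^ 2 := by simp

end LpNorm

section OpNorm

variable {n : ℕ} {p : ENNReal} [Fact (1 ≤ p)] (M : Matrix (Fin n) (Fin n) ℝ)

lemma opNorm_nonneg : 0 ≤ opNorm p M :=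
  Real.sSup_nonneg <| by
    rintro _ ⟨x, -, rfl⟩
    exact div_nonneg (lpnorm_nonneg _) (lpnorm_nonneg _)

lemma opNorm_le {C : ℝ} (hC : 0 ≤ C) (h : ∀ x, lpnorm p (M *ᵥ x) ≤ C * lpnorm p x) :
    opNorm p M ≤ C :=
  Real.sSup_le (by rintro _ ⟨x, hx, rfl⟩; exact div_le_of_le_mul₀ (lpnorm_nonneg _) hC (h x)) hC

lemma div_le_opNorm {C : ℝ} (h : ∀ x, lpnorm p (M *ᵥ x) ≤ C * lpnorm p x) {x : Fin n → ℝ}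
    (hx : x ≠ 0) : lpnorm p (M *ᵥ x) / lpnorm p x ≤ opNorm p M := by
  refine le_csSup ⟨C, ?_⟩ ⟨x, hx, rfl⟩
  rintro _ ⟨y, hy, rfl⟩
  exact (div_le_iff₀ (lpnorm_pos hy)).mpr (h y)

open WithLp in
lemma lpnorm_mulVec_le_opNorm_mul (x : Fin n → ℝ) :
    lpnorm p (M *ᵥ x) ≤ opNorm p M * lpnorm p x := by
  rcases eq_or_ne x 0 with rfl | hx
  · simp [lpnorm_zero]
  let T := LinearMap.toContinuousLinearMap (toLpLin p p M)
  have hT : ∀ y, lpnorm p (M *ᵥ y) ≤ ‖T‖ * lpnorm p y := fun y => by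
    simpa [lpnorm_eq_norm_toLp, T] using T.le_opNorm (toLp p y)
  exact (div_le_iff₀ (lpnorm_pos hx)).mp (div_le_opNorm M hT hx)

end OpNorm

section RowColumnSums

variable {n : ℕ} (M : Matrix (Fin n) (Fin n) ℝ)

lemma lpnorm_top_mulVec_le (x : Fin n → ℝ) :
    lpnorm ⊤ (M *ᵥ x) ≤ (⨆ i, ∑ j, |M i j|) * lpnorm ⊤ x := by
  rw [lpnorm_top_eq_iSup (M *ᵥ x)]
  refine Real.iSup_le (fun i => ?_) <|
    mul_nonneg (Real.iSup_nonneg fun i => sum_nonneg fun j _ => abs_nonneg _) (lpnorm_nonneg x)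
  calc |(M *ᵥ x) i| ≤ ∑ j, |M i j| * |x j| := by
        simpa [mulVec, dotProduct, abs_mul] using abs_sum_le_sum_abs (fun j => M i j * x j) univ
    _ ≤ ∑ j, |M i j| * lpnorm ⊤ x := by
        gcongr with j; exact abs_le_lpnorm_top x j
    _ = (∑ j, |M i j|) * lpnorm ⊤ x := (sum_mul ..).symm
    _ ≤ (⨆ i, ∑ j, |M i j|) * lpnorm ⊤ x := by
        gcongr
        · exact lpnorm_nonneg x
        · exact le_ciSup (f := fun i => ∑ j, |M i j|) (Set.finite_range _).bddAbove i

lemma lpnorm_one_mulVec_le (x : Fin n → ℝ) :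
    lpnorm 1 (M *ᵥ x) ≤ (⨆ j, ∑ i, |M i j|) * lpnorm 1 x := by
  simp only [lpnorm_one_eq_sum, mul_sum]
  calc ∑ i, |(M *ᵥ x) i| ≤ ∑ i, ∑ j, |M i j| * |x j| := by
        gcongr with i
        simpa [mulVec, dotProduct, abs_mul] using abs_sum_le_sum_abs (fun j => M i j * x j) univ
    _ = ∑ j, (∑ i, |M i j|) * |x j| := by rw [sum_comm]; simp only [sum_mul]
    _ ≤ ∑ j, (⨆ j, ∑ i, |M i j|) * |x j| := by
        gcongr with j
        exact le_ciSup (f := fun j => ∑ i, |M i j|) (Set.finite_range _).bddAbove j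

lemma opNorm_top_eq_iSup : opNorm ⊤ M = ⨆ i, ∑ j, |M i j| := by
  refine le_antisymm (opNorm_le M (Real.iSup_nonneg fun i => sum_nonneg fun j _ => abs_nonneg _)
    (lpnorm_top_mulVec_le M)) (Real.iSup_le (fun i => ?_) (opNorm_nonneg M))
  let x : Fin n → ℝ := fun j => if M i j < 0 then -1 else 1
  have hx : ∀ j, |x j| = 1 := fun j => by by_cases h : M i j < 0 <;> simp [x, h]
  have hx0 : x ≠ 0 := fun h => by simpa [h] using hx i
  have hnorm : lpnorm ⊤ x = 1 := by
    have : Nonempty (Fin n) := ⟨i⟩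
    simp [lpnorm_top_eq_iSup, hx]
  have hrow : (M *ᵥ x) i = ∑ j, |M i j| := by
    simp only [mulVec, dotProduct]
    refine sum_congr rfl fun j _ => ?_
    by_cases h : M i j < 0
    · simp [x, h, abs_of_neg h]
    · simp [x, h, abs_of_nonneg (not_lt.mp h)]
  calc ∑ j, |M i j| ≤ |(M *ᵥ x) i| := hrow ▸ le_abs_self _
    _ ≤ lpnorm ⊤ (M *ᵥ x) / lpnorm ⊤ x := by rw [hnorm, div_one]; exact abs_le_lpnorm_top _ i
    _ ≤ opNorm ⊤ M := div_le_opNorm M (lpnorm_top_mulVec_le M) hx0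

lemma opNorm_one_eq_iSup : opNorm 1 M = ⨆ j, ∑ i, |M i j| := by
  refine le_antisymm (opNorm_le M (Real.iSup_nonneg fun j => sum_nonneg fun i _ => abs_nonneg _)
    (lpnorm_one_mulVec_le M)) (Real.iSup_le (fun j => ?_) (opNorm_nonneg M))
  have hx0 : (Pi.single j 1 : Fin n → ℝ) ≠ 0 := by simp
  have hnorm : lpnorm 1 (Pi.single j 1 : Fin n → ℝ) = 1 := by
    simp [lpnorm_one_eq_sum, Pi.single_apply, apply_ite]
  calc ∑ i, |M i j| = lpnorm 1 (M *ᵥ Pi.single j 1) / lpnorm 1 (Pi.single j 1 : Fin n → ℝ) := by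
        simp [hnorm, lpnorm_one_eq_sum, mulVec_single]
    _ ≤ opNorm 1 M := div_le_opNorm M (lpnorm_one_mulVec_le M) hx0

lemma opNorm_one_eq_opNorm_top_transpose : opNorm 1 M = opNorm ⊤ Mᵀ := by
  rw [opNorm_one_eq_iSup, opNorm_top_eq_iSup]
  rfl

end RowColumnSums

section Perturbation

variable {n : ℕ}

lemma abs_inv_sub_one_apply_le {A : Matrix (Fin n) (Fin n) ℝ} (hA : IsUnit A.det) {ε b : ℝ}
    (hε : 0 ≤ ε) (hX : ∀ j k, |(A - 1) j k| ≤ ε) (hb : opNorm 2 A⁻¹ ≤ b) (j k : Fin n) :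
    |(A⁻¹ - 1) j k| ≤ ε + n * b * ε ^ 2 := by
  set Y := 1 - A
  have hY : ∀ j k, |Y j k| ≤ ε := fun j k => by simpa [Y, abs_sub_comm] using hX j k
  have hcol : ∀ i, (A⁻¹ - 1) i k = (A⁻¹ *ᵥ fun l => Y l k) i := fun i => by
    rw [show A⁻¹ - 1 = A⁻¹ * Y by rw [mul_sub, mul_one, nonsing_inv_mul A hA]]
    rfl
  have hentry : (A⁻¹ - 1) j k = Y j k + ∑ i, Y j i * (A⁻¹ - 1) i k := by
    have : A⁻¹ - 1 = Y + Y * (A⁻¹ - 1) := by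
      rw [mul_sub, mul_one, sub_mul, one_mul, mul_nonsing_inv A hA]; abel
    exact congr_fun₂ this j k
  have hb0 : 0 ≤ b := (opNorm_nonneg _).trans hb
  have hrowY : lpnorm 2 (Y j) ≤ √n * ε := lpnorm_two_le_sqrt_mul_of_abs_le hε (hY j)
  have hcolY : lpnorm 2 (fun l => Y l k) ≤ √n * ε := lpnorm_two_le_sqrt_mul_of_abs_le hε (hY · k)
  have hcolX' : lpnorm 2 (fun i => (A⁻¹ - 1) i k) ≤ b * (√n * ε) := by
    simp only [hcol]
    calc lpnorm 2 (A⁻¹ *ᵥ fun l => Y l k) ≤ opNorm 2 A⁻¹ * lpnorm 2 (fun l => Y l k) :=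
          lpnorm_mulVec_le_opNorm_mul _ _
      _ ≤ b * (√n * ε) := mul_le_mul hb hcolY (lpnorm_nonneg _) hb0
  calc |(A⁻¹ - 1) j k| ≤ |Y j k| + |∑ i, Y j i * (A⁻¹ - 1) i k| := hentry ▸ abs_add_le _ _
    _ ≤ ε + (√n * ε) * (b * (√n * ε)) := by
        gcongr
        · exact hY j k
        · exact (abs_sum_mul_le_lpnorm_two_mul _ _).trans
            (mul_le_mul hrowY hcolX' (lpnorm_nonneg _) (by positivity))
    _ = ε + n * b * ε ^ 2 := by
        linear_combination b * ε ^ 2 * Real.mul_self_sqrt (Nat.cast_nonneg (α := ℝ) n)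

lemma sum_abs_apply_le_one_add {B : Matrix (Fin n) (Fin n) ℝ} {δ : ℝ}
    (h : ∀ j k, |(B - 1) j k| ≤ δ) (j : Fin n) : ∑ k, |B j k| ≤ 1 + n * δ := by
  calc ∑ k, |B j k| ≤ ∑ k, (|(1 : Matrix (Fin n) (Fin n) ℝ) j k| + |(B - 1) j k|) :=
        sum_le_sum fun k _ => by
          simpa only [Matrix.sub_apply, add_sub_cancel] using
            abs_add_le ((1 : Matrix _ _ ℝ) j k) ((B - 1) j k)
    _ ≤ 1 + n * δ := by
        rw [sum_add_distrib]
        gcongr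
        · simp [one_apply, apply_ite]
        · simpa using sum_le_sum fun k (_ : k ∈ univ) => h j k

end Perturbation

/-- Lemma 4.1 of the paper: under condition (A), `‖A⁻¹‖_∞ = ‖A⁻¹‖₁ = O(1)` and
the entries of `X' = A⁻¹ − I` are `O(1/n)`. -/
theorem inverse_matrix_estimates (a b : ℝ) (ha : 0 < a) (hb : 0 < b) :
    ∃ c : ℝ, 0 < c ∧
      ∀ (n : ℕ) (A : Matrix (Fin n) (Fin n) ℝ), CondA a b A →
        (opNorm ⊤ A⁻¹ = opNorm 1 A⁻¹ ∧ opNorm ⊤ A⁻¹ ≤ c) ∧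
        (∀ j k, |(A⁻¹ - 1) j k| ≤ c / n) := by
  refine ⟨1 + a + a ^ 2 * b, by positivity, ?_⟩
  rintro n A ⟨hsym, hpd, hdiag, hoff, hop2⟩
  have hX : ∀ j k, |(A - 1) j k| ≤ a / n := fun j k => by
    rcases eq_or_ne j k with rfl | hjk
    · simp only [Matrix.sub_apply, hdiag, one_apply_eq, sub_self, abs_zero]
      positivity
    · simpa [one_apply_ne hjk] using hoff j k hjk
  have hdet : IsUnit A.det := isUnit_iff_ne_zero.mpr hpd.det_pos.ne'
  have hX' : ∀ j k, |(A⁻¹ - 1) j k| ≤ (a + a ^ 2 * b) / n := fun j k => by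
    have hn : (n : ℝ) ≠ 0 := by have := j.pos; positivity
    calc _ ≤ a / n + n * b * (a / n) ^ 2 :=
          abs_inv_sub_one_apply_le hdet (by positivity) hX hop2 j k
      _ = _ := by field_simp
  have hrow : ∀ j, ∑ k, |A⁻¹ j k| ≤ 1 + a + a ^ 2 * b := fun j => by
    have hn : (n : ℝ) ≠ 0 := by have := j.pos; positivity
    calc _ ≤ 1 + n * ((a + a ^ 2 * b) / n) := sum_abs_apply_le_one_add hX' j
      _ = _ := by field_simp; ring
  refine ⟨⟨by rw [opNorm_one_eq_opNorm_top_transpose, hsym.inv.eq], ?_⟩,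
    fun j k => (hX' j k).trans ?_⟩
  · rw [opNorm_top_eq_iSup]
    exact Real.iSup_le hrow (by positivity)
  · gcongr
    linarith
end

section
/- Let ‖·‖ be a submultiplicative matrix norm on n×n complex matrices, let X be an n×n complex matrix with ‖X‖ < 1, and let m ≥ 2 be an integer. Then det(I + X) = exp( ∑_{r=1}^{m−1} ((−1)^{r+1}/r)·tr(X^r) + E_m(X) ), where E_m(X) is a complex number satisfying |E_m(X)| ≤ (n/m)·‖X‖^m/(1 − ‖X‖). -/
/-!
Over `ℂ` let `λ₁, …, λₙ` be the eigenvalues of `X`, i.e. the roots of its characteristic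
polynomial counted with multiplicity. Then `tr (X ^ r) = ∑ λᵢ ^ r` and `det (1 + X) = ∏ (1 + λᵢ)`,
and submultiplicativity gives `|λᵢ| ≤ ‖X‖ < 1` (apply `X` to a nonzero matrix whose columns are
eigenvectors). Hence `det (1 + X) = exp ∑ log (1 + λᵢ)`, and `E_m(X)` is the sum over `i` of the
remainders of the Taylor series of `log (1 + λᵢ)` after `m` terms, each at most
`‖X‖ ^ m / (m (1 - ‖X‖))`.
-/

open Finset

theorem LinearMap.trace_pow_of_isNilpotent_sub_algebraMap {R M : Type*} [CommRing R] [IsReduced R]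
    [AddCommGroup M] [Module R M] {g : Module.End R M} (μ : R)
    (hg : IsNilpotent (g - algebraMap R _ μ)) (r : ℕ) :
    LinearMap.trace R M (g ^ r) = μ ^ r * LinearMap.trace R M 1 := by
  induction r with
  | zero => simp
  | succ r ih =>
    rw [pow_succ, Module.End.mul_eq_comp,
      trace_comp_eq_mul_of_commute_of_isNilpotent μ ((Commute.refl g).pow_left r) hg, ih]
    ring

-- On the generalized eigenspace of `μ`, `f` is `μ` plus a nilpotent map, so `f ^ r` has trace
-- `μ ^ r` times its dimension, which is the multiplicity of `μ` as a root of the charpoly.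
theorem Module.End.trace_pow_eq_sum_roots_charpoly {K V : Type*} [Field K] [IsAlgClosed K]
    [AddCommGroup V] [Module K V] [FiniteDimensional K V] (f : Module.End K V) (r : ℕ) :
    LinearMap.trace K V (f ^ r) = (f.charpoly.roots.map (· ^ r)).sum := by
  classical
  have hinternal := DirectSum.isInternal_submodule_of_iSupIndep_of_iSup_eq_top
    f.independent_maxGenEigenspace f.iSup_maxGenEigenspace_eq_top
  have hfin := WellFoundedGT.finite_ne_bot_of_iSupIndep f.independent_maxGenEigenspace
  have hmaps μ := f.mapsTo_maxGenEigenspace_of_comm ((Commute.refl f).pow_right r) μ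
  have htrace μ : LinearMap.trace K _ ((f ^ r).restrict (hmaps μ)) =
      f.charpoly.roots.count μ • μ ^ r := by
    rw [← Module.End.pow_restrict r (f.mapsTo_maxGenEigenspace_of_comm rfl μ),
      LinearMap.trace_pow_of_isNilpotent_sub_algebraMap μ ?_ r, LinearMap.trace_one,
      LinearMap.finrank_maxGenEigenspace_eq, Polynomial.count_roots, nsmul_eq_mul, mul_comm]
    convert f.isNilpotent_restrict_maxGenEigenspace_sub_algebraMap μ
    ext
    rfl
  rw [LinearMap.trace_eq_sum_trace_restrict' hinternal hfin hmaps, Finset.sum_multiset_map_count]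
  simp_rw [htrace]
  refine (Finset.sum_subset ?_ ?_).symm
  · intro μ hμ
    have hpos : 0 < Module.finrank K (f.maxGenEigenspace μ) := by
      rw [LinearMap.finrank_maxGenEigenspace_eq, ← Polynomial.count_roots]
      exact Multiset.count_pos.mpr (Multiset.mem_toFinset.mp hμ)
    simpa [Submodule.finrank_eq_zero] using hpos.ne'
  · intro μ _ hμ
    rw [Multiset.count_eq_zero_of_notMem (by simpa using hμ), zero_smul]

namespace Matrix

variable {K n : Type*} [Field K] [Fintype n] [DecidableEq n]

theorem trace_pow_eq_sum_roots_charpoly [IsAlgClosed K] (A : Matrix n n K) (r : ℕ) :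
    (A ^ r).trace = (A.charpoly.roots.map (· ^ r)).sum := by
  rw [← trace_toLin'_eq, toLin'_pow, Module.End.trace_pow_eq_sum_roots_charpoly, charpoly_toLin']

theorem card_roots_charpoly [IsAlgClosed K] (A : Matrix n n K) :
    A.charpoly.roots.card = Fintype.card n := by
  rw [IsAlgClosed.card_roots_eq_natDegree, charpoly_natDegree_eq_dim]

theorem det_one_add_eq_prod_roots_charpoly [IsAlgClosed K] (A : Matrix n n K) :
    (1 + A).det = (A.charpoly.roots.map (1 + ·)).prod := by
  have h := eval_charpoly A (-1)
  rw [← Polynomial.prod_multiset_X_sub_C_of_monic_of_roots_card_eq A.charpoly_monic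
    IsAlgClosed.card_roots_eq_natDegree, Polynomial.eval_multiset_prod, Multiset.map_map] at h
  have hneg : scalar n (-1 : K) - A = -(1 + A) := by rw [map_neg, map_one]; abel
  simp only [Function.comp_def, Polynomial.eval_sub, Polynomial.eval_X, Polynomial.eval_C,
    ← neg_add', hneg, det_neg] at h
  rw [show (fun a : K => -(1 + a)) = Neg.neg ∘ (1 + ·) from rfl, ← Multiset.map_map,
    Multiset.prod_map_neg, Multiset.card_map, card_roots_charpoly] at h
  exact (mul_left_cancel₀ (pow_ne_zero _ (neg_ne_zero.2 one_ne_zero)) h).symm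

theorem norm_le_of_isRoot_charpoly {𝕜 : Type*} [NormedField 𝕜] (N : Matrix n n 𝕜 → ℝ)
    (hNpos : ∀ A, A ≠ 0 → 0 < N A) (hNsmul : ∀ (c : 𝕜) A, N (c • A) = ‖c‖ * N A)
    (hNmul : ∀ A B, N (A * B) ≤ N A * N B) {X : Matrix n n 𝕜} {μ : 𝕜}
    (hμ : X.charpoly.IsRoot μ) : ‖μ‖ ≤ N X := by
  rw [← charpoly_toLin', ← Module.End.hasEigenvalue_iff_isRoot_charpoly] at hμ
  obtain ⟨v, hv⟩ := hμ.exists_hasEigenvector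
  set V : Matrix n n 𝕜 := vecMulVec v v
  have hV : V ≠ 0 := by simpa [V, vecMulVec_eq_zero] using hv.2
  have hXV : X * V = μ • V := by
    rw [mul_vecMulVec, ← toLin'_apply, hv.apply_eq_smul, smul_vecMulVec]
  have : ‖μ‖ * N V ≤ N X * N V := by
    rw [← hNsmul, ← hXV]
    exact hNmul _ _
  exact le_of_mul_le_mul_right this (hNpos _ hV)

end Matrix

namespace Complex

theorem logTaylor_eq_sum_Icc (m : ℕ) (z : ℂ) :
    logTaylor m z = ∑ r ∈ Icc 1 (m - 1), (-1) ^ (r + 1) / r * z ^ r := by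
  rw [logTaylor, ← Finset.sum_subset (s₁ := Icc 1 (m - 1)) (s₂ := range m)]
  · exact sum_congr rfl fun r _ => by ring
  · intro r
    simp only [mem_Icc, mem_range]
    omega
  · intro r hr hr'
    obtain rfl : r = 0 := by simp only [mem_Icc, mem_range] at hr hr'; omega
    simp

theorem norm_log_one_add_sub_logTaylor_le {m : ℕ} (hm : 0 < m) {z : ℂ} {ρ : ℝ} (hz : ‖z‖ ≤ ρ)
    (hρ : ρ < 1) : ‖log (1 + z) - logTaylor m z‖ ≤ ρ ^ m / (1 - ρ) / m := by
  obtain ⟨k, rfl⟩ := Nat.exists_eq_succ_of_ne_zero hm.ne'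
  have hz1 : ‖z‖ < 1 := hz.trans_lt hρ
  have hρ0 : 0 ≤ ρ := (norm_nonneg z).trans hz
  calc ‖log (1 + z) - logTaylor (k + 1) z‖ ≤ ‖z‖ ^ (k + 1) * (1 - ‖z‖)⁻¹ / (k + 1) :=
        norm_log_sub_logTaylor_le k hz1
    _ ≤ ρ ^ (k + 1) / (1 - ρ) / (k + 1 : ℕ) := by
        rw [← div_eq_mul_inv, Nat.cast_succ]
        gcongr

theorem prod_map_one_add_eq_exp_sum_log {s : Multiset ℂ} (hs : ∀ z ∈ s, ‖z‖ < 1) :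
    (s.map (1 + ·)).prod = exp (s.map fun z => log (1 + z)).sum := by
  rw [exp_multiset_sum, Multiset.map_map]
  congr 1
  refine (Multiset.map_congr rfl fun z hz => exp_log ?_).symm
  rw [← neg_neg z, ← sub_eq_add_neg, sub_ne_zero]
  exact fun h => (hs z hz).ne' (by rw [← norm_neg, ← h, norm_one])

end Complex

open Matrix

/-- Lemma 8.1 of the paper: if `‖X‖ < 1` for a submultiplicative matrix norm
`N`, then `det(I + X) = exp(∑_{r=1}^{m-1} ((-1)^{r+1}/r) tr(X^r) + E_m(X))` with
`|E_m(X)| ≤ (n/m) ‖X‖^m / (1 − ‖X‖)`. -/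
theorem det_log_expansion (n m : ℕ) (hm : 2 ≤ m)
    (N : Matrix (Fin n) (Fin n) ℂ → ℝ)
    (hN0 : ∀ A, N A = 0 ↔ A = 0)
    (hNadd : ∀ A B, N (A + B) ≤ N A + N B)
    (hNsmul : ∀ (c : ℂ) (A), N (c • A) = ‖c‖ * N A)
    (hNmul : ∀ A B, N (A * B) ≤ N A * N B)
    (X : Matrix (Fin n) (Fin n) ℂ) (hX : N X < 1) :
    ∃ E : ℂ,
      (1 + X).det =
        Complex.exp ((∑ r ∈ Finset.Icc 1 (m - 1), ((-1 : ℂ) ^ (r + 1) / r) * (X ^ r).trace)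
          + E) ∧
      ‖E‖ ≤ (n / m) * N X ^ m / (1 - N X) := by
  -- a subadditive, absolutely homogeneous `N` is a seminorm, hence nonnegative
  have hNpos A (hA : A ≠ 0) : 0 < N A :=
    (apply_nonneg (Seminorm.of N hNadd hNsmul) A).lt_of_ne' (mt (hN0 A).1 hA)
  set e := X.charpoly.roots
  have he z (hz : z ∈ e) : ‖z‖ ≤ N X :=
    norm_le_of_isRoot_charpoly N hNpos hNsmul hNmul (Polynomial.isRoot_of_mem_roots hz)
  have htaylor : ∑ r ∈ Icc 1 (m - 1), (-1 : ℂ) ^ (r + 1) / r * (X ^ r).trace =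
      (e.map (Complex.logTaylor m)).sum := by
    simp_rw [trace_pow_eq_sum_roots_charpoly, Complex.logTaylor_eq_sum_Icc,
      ← Multiset.sum_map_mul_left]
    exact Multiset.sum_map_sum_map _ _
  refine ⟨(e.map fun z => Complex.log (1 + z) - Complex.logTaylor m z).sum, ?_, ?_⟩
  · rw [htaylor, ← Multiset.sum_map_add, det_one_add_eq_prod_roots_charpoly,
      Complex.prod_map_one_add_eq_exp_sum_log fun z hz => (he z hz).trans_lt hX]
    simp only [add_sub_cancel]
  · calc _ ≤ (e.map fun z => ‖Complex.log (1 + z) - Complex.logTaylor m z‖).sum := by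
          simpa only [Multiset.map_map, Function.comp_def] using
            norm_multiset_sum_le (e.map fun z => Complex.log (1 + z) - Complex.logTaylor m z)
      _ ≤ (e.map fun _ => N X ^ m / (1 - N X) / m).sum :=
          Multiset.sum_map_le_sum_map _ _ fun z hz =>
            Complex.norm_log_one_add_sub_logTaylor_le (by omega) (he z hz) hX
      _ = n / m * N X ^ m / (1 - N X) := by
          rw [Multiset.map_const', Multiset.sum_replicate, card_roots_charpoly, Fintype.card_fin,
            nsmul_eq_mul]
          ring
end

section
/- Let Q be an n×n real matrix and M an n×n real symmetric matrix. For ξ ∈ ℝⁿ let Λ(ξ) denote the diagonal matrix whose diagonal entries are the components of the vector Qξ. Then for all ξ₁, ξ₂ ∈ ℝⁿ: | tr( Λ(ξ₁)·M·Λ(ξ₂)·M ) | ≤ ‖Q‖₂²·‖M‖₂²·‖ξ₁‖₂·‖ξ₂‖₂, where ‖·‖₂ denotes the spectral norm for matrices and the Euclidean norm for vectors. -/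
open MeasureTheory Matrix Finset

lemma lpnorm_two {n : ℕ} (x : Fin n → ℝ) : lpnorm 2 x = Real.sqrt (∑ j, x j ^ 2) := by
  have h2 : (2 : ENNReal) ≠ ⊤ := by simp
  simp only [lpnorm, h2, if_false]
  have ht : (2 : ENNReal).toReal = 2 := by simp
  rw [ht]
  rw [Real.sqrt_eq_rpow]
  congr 1
  · refine Finset.sum_congr rfl fun j _ => ?_
    rw [show ((2:ℝ)) = ((2:ℕ):ℝ) by norm_num, Real.rpow_natCast, sq_abs]

lemma lpnorm_two_nonneg {n : ℕ} (x : Fin n → ℝ) : 0 ≤ lpnorm 2 x := by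
  rw [lpnorm_two]; exact Real.sqrt_nonneg _

lemma lpnorm_two_sq {n : ℕ} (x : Fin n → ℝ) : lpnorm 2 x ^ 2 = ∑ j, x j ^ 2 := by
  rw [lpnorm_two, Real.sq_sqrt]
  exact Finset.sum_nonneg fun j _ => sq_nonneg _

lemma lpnorm_two_pos {n : ℕ} {x : Fin n → ℝ} (hx : x ≠ 0) : 0 < lpnorm 2 x := by
  rw [lpnorm_two]
  apply Real.sqrt_pos.2
  rcases Function.ne_iff.1 hx with ⟨j, hj⟩
  have hj' : x j ≠ 0 := by simpa using hj
  have : 0 < x j ^ 2 := by positivity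
  exact lt_of_lt_of_le this (Finset.single_le_sum (fun i _ => sq_nonneg (x i)) (mem_univ j))

lemma mulVec_lpnorm_aux {n : ℕ} (A : Matrix (Fin n) (Fin n) ℝ) (x : Fin n → ℝ) :
    lpnorm 2 (A.mulVec x) ≤ Real.sqrt (∑ j, ∑ k, A j k ^ 2) * lpnorm 2 x := by
  rw [lpnorm_two, lpnorm_two, ← Real.sqrt_mul (by positivity), Finset.sum_mul]
  apply Real.sqrt_le_sqrt
  apply Finset.sum_le_sum
  intro j _
  calc A.mulVec x j ^ 2 = (∑ k, A j k * x k) ^ 2 := by rfl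
    _ ≤ (∑ k, A j k ^ 2) * ∑ k, x k ^ 2 := Finset.sum_mul_sq_le_sq_mul_sq _ _ _

lemma opNorm_bddAbove {n : ℕ} (A : Matrix (Fin n) (Fin n) ℝ) :
    BddAbove {c : ℝ | ∃ x : Fin n → ℝ, x ≠ 0 ∧ c = lpnorm 2 (A.mulVec x) / lpnorm 2 x} := by
  refine ⟨Real.sqrt (∑ j, ∑ k, A j k ^ 2), ?_⟩
  rintro c ⟨x, hx, rfl⟩
  rw [div_le_iff₀ (lpnorm_two_pos hx)]
  exact mulVec_lpnorm_aux A x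

lemma opNorm_two_nonneg {n : ℕ} (A : Matrix (Fin n) (Fin n) ℝ) : 0 ≤ opNorm 2 A := by
  apply Real.sSup_nonneg
  rintro c ⟨x, hx, rfl⟩
  exact div_nonneg (lpnorm_two_nonneg _) (lpnorm_two_nonneg _)

lemma lpnorm_mulVec_le {n : ℕ} (A : Matrix (Fin n) (Fin n) ℝ) (x : Fin n → ℝ) :
    lpnorm 2 (A.mulVec x) ≤ opNorm 2 A * lpnorm 2 x := by
  rcases eq_or_ne x 0 with rfl | hx
  · simp only [Matrix.mulVec_zero]
    have : lpnorm 2 (0 : Fin n → ℝ) = 0 := by simp [lpnorm_two]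
    rw [this, mul_zero]
  · have hmem : lpnorm 2 (A.mulVec x) / lpnorm 2 x ∈
        {c : ℝ | ∃ x : Fin n → ℝ, x ≠ 0 ∧ c = lpnorm 2 (A.mulVec x) / lpnorm 2 x} := ⟨x, hx, rfl⟩
    have := le_csSup (opNorm_bddAbove A) hmem
    rw [div_le_iff₀ (lpnorm_two_pos hx)] at this
    exact this

lemma lpnorm_single {n : ℕ} (j : Fin n) : lpnorm 2 (Pi.single j (1:ℝ)) = 1 := by
  rw [lpnorm_two]
  have : ∑ k : Fin n, (Pi.single j (1:ℝ) : Fin n → ℝ) k ^ 2 = 1 := by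
    simp [Pi.single_apply, sq]
  rw [this, Real.sqrt_one]

/-- formula (5.19)/(8.18) of the paper: the trace bound
`|tr(Λ(ξ₁) M Λ(ξ₂) M)| ≤ ‖Q‖₂² ‖M‖₂² ‖ξ₁‖₂ ‖ξ₂‖₂`. -/
theorem trace_diagonal_bound (n : ℕ) (Q M : Matrix (Fin n) (Fin n) ℝ) (hM : M.IsSymm)
    (ξ₁ ξ₂ : Fin n → ℝ) :
    |((Matrix.diagonal (Q.mulVec ξ₁)) * M * (Matrix.diagonal (Q.mulVec ξ₂)) * M).trace| ≤
      opNorm 2 Q ^ 2 * opNorm 2 M ^ 2 * lpnorm 2 ξ₁ * lpnorm 2 ξ₂ := by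
  set u := Q.mulVec ξ₁ with hu
  set v := Q.mulVec ξ₂ with hv
  set C := opNorm 2 M with hC
  have hC0 : 0 ≤ C := opNorm_two_nonneg M
  have hsym : ∀ i j, M i j = M j i := fun i j => by
    conv_lhs => rw [← hM]
    rfl
  -- column norm bound
  have hcol : ∀ j, ∑ i, M i j ^ 2 ≤ C ^ 2 := by
    intro j
    have hmv : M.mulVec (Pi.single j (1:ℝ)) = fun i => M i j := by
      funext i
      simp [Matrix.mulVec, dotProduct, Pi.single_apply, mul_ite]
    have h1 : lpnorm 2 (M.mulVec (Pi.single j (1:ℝ))) ≤ C := by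
      have := lpnorm_mulVec_le M (Pi.single j (1:ℝ))
      rwa [lpnorm_single, mul_one] at this
    have h2 : (∑ i, M i j ^ 2) = lpnorm 2 (M.mulVec (Pi.single j (1:ℝ))) ^ 2 := by
      rw [lpnorm_two_sq, hmv]
    rw [h2]
    exact pow_le_pow_left₀ (lpnorm_two_nonneg _) h1 2
  have hrow : ∀ j, ∑ k, M j k ^ 2 ≤ C ^ 2 := by
    intro j
    calc ∑ k, M j k ^ 2 = ∑ k, M k j ^ 2 := by
          refine Finset.sum_congr rfl fun k _ => by rw [hsym j k]
      _ ≤ C ^ 2 := hcol j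
  -- trace formula
  have htr : ((Matrix.diagonal u) * M * (Matrix.diagonal v) * M).trace
      = ∑ j, ∑ k, u j * M j k * v k * M k j := by
    simp only [Matrix.trace, Matrix.diag, Matrix.mul_apply, Matrix.diagonal_apply,
      ite_mul, zero_mul, mul_ite, mul_zero, Finset.sum_ite_eq, Finset.sum_ite_eq',
      Finset.mem_univ, if_true]
  rw [htr]
  -- Cauchy-Schwarz step
  set f : Fin n × Fin n → ℝ := fun p => |u p.1| * |M p.1 p.2| with hf
  set g : Fin n × Fin n → ℝ := fun p => |v p.2| * |M p.1 p.2| with hg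
  have habs : |∑ j, ∑ k, u j * M j k * v k * M k j| ≤ ∑ p : Fin n × Fin n, f p * g p := by
    rw [← Finset.univ_product_univ, Finset.sum_product]
    calc |∑ j, ∑ k, u j * M j k * v k * M k j|
        ≤ ∑ j, |∑ k, u j * M j k * v k * M k j| := Finset.abs_sum_le_sum_abs _ _
      _ ≤ ∑ j, ∑ k, |u j * M j k * v k * M k j| :=
          Finset.sum_le_sum fun j _ => Finset.abs_sum_le_sum_abs _ _
      _ = ∑ j, ∑ k, f (j, k) * g (j, k) := by
          refine Finset.sum_congr rfl fun j _ => Finset.sum_congr rfl fun k _ => ?_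
          simp only [hf, hg, abs_mul]
          rw [hsym k j]
          ring
  have hX : ∑ p : Fin n × Fin n, f p ^ 2 ≤ C ^ 2 * ∑ j, u j ^ 2 := by
    rw [← Finset.univ_product_univ, Finset.sum_product, Finset.mul_sum]
    refine Finset.sum_le_sum fun j _ => ?_
    have : ∑ k, f (j, k) ^ 2 = u j ^ 2 * ∑ k, M j k ^ 2 := by
      rw [Finset.mul_sum]
      refine Finset.sum_congr rfl fun k _ => ?_
      simp only [hf, mul_pow, sq_abs]
    rw [this]
    calc u j ^ 2 * ∑ k, M j k ^ 2 ≤ u j ^ 2 * C ^ 2 :=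
          mul_le_mul_of_nonneg_left (hrow j) (sq_nonneg _)
      _ = C ^ 2 * u j ^ 2 := by ring
  have hY : ∑ p : Fin n × Fin n, g p ^ 2 ≤ C ^ 2 * ∑ k, v k ^ 2 := by
    rw [← Finset.univ_product_univ, Finset.sum_product_right, Finset.mul_sum]
    refine Finset.sum_le_sum fun k _ => ?_
    have : ∑ j, g (j, k) ^ 2 = v k ^ 2 * ∑ j, M j k ^ 2 := by
      rw [Finset.mul_sum]
      refine Finset.sum_congr rfl fun j _ => ?_
      simp only [hg, mul_pow, sq_abs]
    rw [this]
    calc v k ^ 2 * ∑ j, M j k ^ 2 ≤ v k ^ 2 * C ^ 2 :=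
          mul_le_mul_of_nonneg_left (hcol k) (sq_nonneg _)
      _ = C ^ 2 * v k ^ 2 := by ring
  have hT0 : 0 ≤ ∑ p : Fin n × Fin n, f p * g p :=
    Finset.sum_nonneg fun p _ => mul_nonneg (by positivity) (by positivity)
  have hCS : (∑ p : Fin n × Fin n, f p * g p) ≤ (C * lpnorm 2 u) * (C * lpnorm 2 v) := by
    have h1 : (∑ p : Fin n × Fin n, f p * g p) ^ 2 ≤
        (C ^ 2 * ∑ j, u j ^ 2) * (C ^ 2 * ∑ k, v k ^ 2) := by
      refine le_trans (Finset.sum_mul_sq_le_sq_mul_sq _ _ _) ?_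
      exact mul_le_mul hX hY (Finset.sum_nonneg fun p _ => sq_nonneg _)
        (by positivity)
    have h2 : (C ^ 2 * ∑ j, u j ^ 2) * (C ^ 2 * ∑ k, v k ^ 2)
        = ((C * lpnorm 2 u) * (C * lpnorm 2 v)) ^ 2 := by
      rw [← lpnorm_two_sq u, ← lpnorm_two_sq v]; ring
    rw [h2] at h1
    have hRHS0 : 0 ≤ (C * lpnorm 2 u) * (C * lpnorm 2 v) := by
      have := lpnorm_two_nonneg u
      have := lpnorm_two_nonneg v
      positivity
    nlinarith [hT0, h1, hRHS0]
  have hfin : (C * lpnorm 2 u) * (C * lpnorm 2 v) ≤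
      opNorm 2 Q ^ 2 * C ^ 2 * lpnorm 2 ξ₁ * lpnorm 2 ξ₂ := by
    have hQ0 : 0 ≤ opNorm 2 Q := opNorm_two_nonneg Q
    have h1 : lpnorm 2 u ≤ opNorm 2 Q * lpnorm 2 ξ₁ := lpnorm_mulVec_le Q ξ₁
    have h2 : lpnorm 2 v ≤ opNorm 2 Q * lpnorm 2 ξ₂ := lpnorm_mulVec_le Q ξ₂
    calc (C * lpnorm 2 u) * (C * lpnorm 2 v)
        ≤ (C * (opNorm 2 Q * lpnorm 2 ξ₁)) * (C * (opNorm 2 Q * lpnorm 2 ξ₂)) := by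
          refine mul_le_mul (mul_le_mul_of_nonneg_left h1 hC0)
            (mul_le_mul_of_nonneg_left h2 hC0)
            (mul_nonneg hC0 (lpnorm_two_nonneg _)) ?_
          have := lpnorm_two_nonneg ξ₁
          positivity
      _ = opNorm 2 Q ^ 2 * C ^ 2 * lpnorm 2 ξ₁ * lpnorm 2 ξ₂ := by ring
  calc |∑ j, ∑ k, u j * M j k * v k * M k j|
      ≤ ∑ p : Fin n × Fin n, f p * g p := habs
    _ ≤ (C * lpnorm 2 u) * (C * lpnorm 2 v) := hCS
    _ ≤ opNorm 2 Q ^ 2 * C ^ 2 * lpnorm 2 ξ₁ * lpnorm 2 ξ₂ := hfin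
end
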